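/- arXiv:1703.06176 — 2 statements merged into one kernel-verified Lean document; each statement's English description precedes it below -/
import Mathlib

section
/- Marginalization bound: with (S, O_E, O_{-E}) having joint density |J|·f(s)·g_E(D_E s + P_E o_E + q_E)·∏_j g_{j,-E}(o_{j,-E} + D_{j,-E}s + P_{j,-E}o_E + q_{j,-E}), and separable selection region R = R_S × R_E × ∏_j R_{j,-E}, the probability P((S,O) ∈ R) equals E[B(O_E; S) 1_{(S,O_E) ∈ R_S × R_E}], where B(o_E; s) = ∏_j ∫_{R_{j,-E}} g_{j,-E}(o_{j,-E} + D_{j,-E}s + P_{j,-E}o_E + q_{j,-E}) do_{j,-E}. -/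
open MeasureTheory Matrix Real

theorem setIntegral_univ_pi_fintype_prod_eq_prod {𝕜 ι : Type*} [RCLike 𝕜] [Fintype ι]
    {E : ι → Type*} {mE : ∀ i, MeasurableSpace (E i)} {μ : (i : ι) → Measure (E i)}
    [∀ i, SigmaFinite (μ i)] (f : (i : ι) → E i → 𝕜) (s : (i : ι) → Set (E i)) :
    ∫ x in Set.univ.pi s, ∏ i, f i (x i) ∂Measure.pi μ = ∏ i, ∫ t in s i, f i t ∂μ i := by
  rw [Measure.restrict_pi_pi]
  exact integral_fintype_prod_eq_prod f

theorem marginalization_inactive_variables_general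
    {d e m : ℕ}
    (J : ℝ)
    (f : (Fin d → ℝ) → ℝ) (gE : (Fin e → ℝ) → ℝ) (g : Fin m → ℝ → ℝ)
    (DE : Matrix (Fin e) (Fin d) ℝ) (PE : Matrix (Fin e) (Fin e) ℝ) (qE : Fin e → ℝ)
    (Dm : Matrix (Fin m) (Fin d) ℝ) (Pm : Matrix (Fin m) (Fin e) ℝ) (qm : Fin m → ℝ)
    (RS : Set (Fin d → ℝ)) (RE : Set (Fin e → ℝ)) (Rm : Fin m → Set ℝ)
    -- `B(o_E; s)`: exact volume of the inactive selection region
    (B : (Fin e → ℝ) → (Fin d → ℝ) → ℝ)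
    (hB : ∀ oE s, B oE s =
      ∏ j, ∫ t in Rm j, g j (t + (Dm *ᵥ s) j + (Pm *ᵥ oE) j + qm j)) :
    -- `P((S,O) ∈ R)` as the integral of the joint density over the separable region
    (∫ s in RS, ∫ oE in RE, ∫ om in {om : Fin m → ℝ | ∀ j, om j ∈ Rm j},
        |J| * f s * gE (DE *ᵥ s + PE *ᵥ oE + qE) *
          ∏ j, g j (om j + (Dm *ᵥ s) j + (Pm *ᵥ oE) j + qm j))
      = ∫ s in RS, ∫ oE in RE,
          |J| * f s * gE (DE *ᵥ s + PE *ᵥ oE + qE) * B oE s := by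
  have hRm_pi : {om : Fin m → ℝ | ∀ j, om j ∈ Rm j} = Set.univ.pi Rm := by
    ext om
    simp
  congr 1 with s
  congr 1 with oE
  rw [hRm_pi, integral_const_mul, hB, volume_pi]
  exact congrArg _ <| setIntegral_univ_pi_fintype_prod_eq_prod
    (fun j t => g j (t + (Dm *ᵥ s) j + (Pm *ᵥ oE) j + qm j)) Rm

/-- Marginalization of the inactive optimization variables: with joint density
`|J| · f(s) · g_E(D_E s + P_E o_E + q_E) · ∏_j g_{j,-E}(o_{j,-E} + D_{j,-E} s + P_{j,-E} o_E + q_{j,-E})`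
on `(s, o_E, o_{-E})` and a separable selection region
`R = R_S × R_E × ∏_j R_{j,-E}`, the selection probability
`P((S,O) ∈ R)` equals `E[ B(O_E; S) 1_{(S,O_E) ∈ R_S × R_E} ]`, where
`B(o_E; s) = ∏_j ∫_{R_{j,-E}} g_{j,-E}(t + D_{j,-E} s + P_{j,-E} o_E + q_{j,-E}) dt`. -/
theorem marginalization_inactive_variables
    {d e m : ℕ}
    (J : ℝ)
    (f : (Fin d → ℝ) → ℝ) (gE : (Fin e → ℝ) → ℝ) (g : Fin m → ℝ → ℝ)
    (hf : Measurable f) (hgE : Measurable gE) (hg : ∀ j, Measurable (g j))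
    (hfpos : ∀ s, 0 ≤ f s) (hgEpos : ∀ w, 0 ≤ gE w) (hgpos : ∀ j t, 0 ≤ g j t)
    (hfint : Integrable f) (hgEint : Integrable gE) (hgint : ∀ j, Integrable (g j))
    (DE : Matrix (Fin e) (Fin d) ℝ) (PE : Matrix (Fin e) (Fin e) ℝ) (qE : Fin e → ℝ)
    (Dm : Matrix (Fin m) (Fin d) ℝ) (Pm : Matrix (Fin m) (Fin e) ℝ) (qm : Fin m → ℝ)
    (RS : Set (Fin d → ℝ)) (RE : Set (Fin e → ℝ)) (Rm : Fin m → Set ℝ)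
    (hRS : MeasurableSet RS) (hRE : MeasurableSet RE)
    (hRm : ∀ j, MeasurableSet (Rm j))
    -- `B(o_E; s)`: exact volume of the inactive selection region
    (B : (Fin e → ℝ) → (Fin d → ℝ) → ℝ)
    (hB : ∀ oE s, B oE s =
      ∏ j, ∫ t in Rm j, g j (t + (Dm *ᵥ s) j + (Pm *ᵥ oE) j + qm j)) :
    -- `P((S,O) ∈ R)` as the integral of the joint density over the separable region
    (∫ s in RS, ∫ oE in RE, ∫ om in {om : Fin m → ℝ | ∀ j, om j ∈ Rm j},
        |J| * f s * gE (DE *ᵥ s + PE *ᵥ oE + qE) *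
          ∏ j, g j (om j + (Dm *ᵥ s) j + (Pm *ᵥ oE) j + qm j))
      = ∫ s in RS, ∫ oE in RE,
          |J| * f s * gE (DE *ᵥ s + PE *ᵥ oE + qE) * B oE s :=
  marginalization_inactive_variables_general J f gE g DE PE qE Dm Pm qm RS RE Rm B hB
end

section
/- Gradient of the selective log-posterior: if f(s|β*) is Gaussian with mean μ(β*) and covariance Σ_f, and the approximate normalizer is exp(δ*(Σ_f^{-1}μ(β*)) − μ(β*)ᵀΣ_f^{-1}μ(β*)/2 + const) where δ(z) = ½zᵀΣ_f^{-1}z + inf_o { Λ_g*(Dz + Po + q) + b(o) } is differentiable and strictly convex, then the gradient of log π̃(β*|s) = log π(β*) + log f(s|β*) − log normalizer with respect to β* equals ∂log π/∂β* + (∂μ/∂β*)ᵀ Σ_f^{-1}(s − s*(Σ_f^{-1}μ(β*))), where s*(v) = ∇δ*(v) = argmax_z { zᵀv − δ(z) }. -/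
/-!
The Fenchel–Young inequality makes `s*(v)` a subgradient of the conjugate `δ*` at every `v`.
Strict convexity of `δ` makes the maximiser unique, and since `δ*` is convex, hence locally
bounded, the subgradients `s*(w)` stay in a compact set for `w` near `v`; every cluster point of
`s*` at `v` is then a maximiser, so `s*` is continuous. A convex function with a continuous
subgradient selection is differentiable with that derivative, so `∇δ* = s*`. Finally, for the
symmetric matrix `Σ_f⁻¹` the two quadratic forms in `μ(β)` cancel, leaving
`log π(β) + sᵀΣ_f⁻¹μ(β) - δ*(Σ_f⁻¹μ(β))` up to a constant, and the chain rule gives the formula.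
-/

open Matrix Real

open Filter Topology Set

theorem hasFDerivAt_of_subgradient_of_continuousAt {E : Type*} [NormedAddCommGroup E]
    [NormedSpace ℝ E] {f : E → ℝ} {g : E → E →L[ℝ] ℝ} {v : E}
    (hsub : ∀ x y, f x + g x (y - x) ≤ f y) (hg : ContinuousAt g v) :
    HasFDerivAt f (g v) v := by
  refine .of_isLittleO <| Asymptotics.isLittleO_iff.mpr fun c hc => ?_
  filter_upwards [hg.eventually (Metric.closedBall_mem_nhds (g v) hc)] with w hw
  have lower := hsub v w
  have upper := hsub w v
  have hneg : g w (v - w) = -g w (w - v) := by rw [← map_neg, neg_sub]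
  have hbound : (g w - g v) (w - v) ≤ c * ‖w - v‖ :=
    (le_abs_self _).trans <| (ContinuousLinearMap.le_opNorm _ _).trans <|
      mul_le_mul_of_nonneg_right (mem_closedBall_iff_norm.mp hw) (norm_nonneg _)
  rw [_root_.sub_apply] at hbound
  rw [Real.norm_eq_abs, abs_le]
  constructor <;> linarith [mul_nonneg hc.le (norm_nonneg (w - v))]

section

variable {ι : Type*} [Fintype ι]

noncomputable def dotProductCLM : (ι → ℝ) →L[ℝ] (ι → ℝ) →L[ℝ] ℝ :=
  LinearMap.toContinuousLinearMap
    ((LinearMap.toContinuousLinearMap : ((ι → ℝ) →ₗ[ℝ] ℝ) ≃ₗ[ℝ] _).toLinearMap ∘ₗ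
      dotProductBilin ℝ ℝ)

@[simp] lemma dotProductCLM_apply (a x : ι → ℝ) : dotProductCLM a x = a ⬝ᵥ x := rfl

theorem Matrix.IsSymm.mulVec_dotProduct_comm {A : Matrix ι ι ℝ} (hA : A.IsSymm) (x y : ι → ℝ) :
    (A *ᵥ x) ⬝ᵥ y = x ⬝ᵥ (A *ᵥ y) := by
  rw [dotProduct_comm, dotProduct_mulVec, ← mulVec_transpose, hA.eq, dotProduct_comm]

theorem Matrix.IsSymm.mulVec_sub_dotProduct_sub {A : Matrix ι ι ℝ} (hA : A.IsSymm) (x y : ι → ℝ) :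
    (A *ᵥ (x - y)) ⬝ᵥ (x - y) = (A *ᵥ x) ⬝ᵥ x - 2 * (A *ᵥ x) ⬝ᵥ y + (A *ᵥ y) ⬝ᵥ y := by
  simp only [mulVec_sub, sub_dotProduct, dotProduct_sub, hA.mulVec_dotProduct_comm y x,
    dotProduct_comm y (A *ᵥ x)]
  ring

theorem norm_le_two_mul_of_subgradient {f : (ι → ℝ) → ℝ} {a x : ι → ℝ} {C : ℝ}
    (hsub : ∀ y, f x + a ⬝ᵥ (y - x) ≤ f y) (hC : ∀ y ∈ Metric.closedBall x 1, |f y| ≤ C) :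
    ‖a‖ ≤ 2 * C := by
  classical
  have hbound : ∀ u : ι → ℝ, ‖u‖ ≤ 1 → a ⬝ᵥ u ≤ 2 * C := fun u hu => by
    have hx := abs_le.mp (hC x (Metric.mem_closedBall_self zero_le_one))
    have hxu := abs_le.mp (hC (x + u) (by simpa [dist_eq_norm] using hu))
    have := hsub (x + u)
    rw [add_sub_cancel_left] at this
    linarith [hx.1, hxu.2]
  have hC0 : 0 ≤ 2 * C := by simpa using hbound 0 (by simp)
  refine (pi_norm_le_iff_of_nonneg hC0).mpr fun i => Real.norm_eq_abs _ ▸ abs_le.mpr ⟨?_, ?_⟩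
  · simpa [neg_le] using hbound (Pi.single i (-1)) (by simp [Pi.norm_single])
  · simpa using hbound (Pi.single i 1) (by simp [Pi.norm_single])

section Conjugate

variable {δ δstar : (ι → ℝ) → ℝ} {sstar : (ι → ℝ) → ι → ℝ}

theorem conj_add_dotProduct_le
    (hsstar : ∀ v, IsMaxOn (fun z => z ⬝ᵥ v - δ z) univ (sstar v))
    (hδstar : ∀ v, δstar v = sstar v ⬝ᵥ v - δ (sstar v)) (v w : ι → ℝ) :
    δstar v + sstar v ⬝ᵥ (w - v) ≤ δstar w := by
  have : sstar v ⬝ᵥ w - δ (sstar v) ≤ sstar w ⬝ᵥ w - δ (sstar w) := hsstar w (mem_univ _)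
  rw [hδstar, hδstar, dotProduct_sub]
  linarith

theorem convexOn_conj
    (hsstar : ∀ v, IsMaxOn (fun z => z ⬝ᵥ v - δ z) univ (sstar v))
    (hδstar : ∀ v, δstar v = sstar v ⬝ᵥ v - δ (sstar v)) :
    ConvexOn ℝ univ δstar := by
  refine ⟨convex_univ, fun x _ y _ a b ha hb hab => ?_⟩
  set u := a • x + b • y
  have hx := conj_add_dotProduct_le hsstar hδstar u x
  have hy := conj_add_dotProduct_le hsstar hδstar u y
  have hcomb : a * (sstar u ⬝ᵥ (x - u)) + b * (sstar u ⬝ᵥ (y - u)) = 0 := by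
    simp only [u, dotProduct_sub, dotProduct_add, dotProduct_smul, smul_eq_mul]
    linear_combination -(a * sstar u ⬝ᵥ x + b * sstar u ⬝ᵥ y) * hab
  have hsplit : a * δstar u + b * δstar u = δstar u := by rw [← add_mul, hab, one_mul]
  simp only [smul_eq_mul]
  linarith [mul_le_mul_of_nonneg_left hx ha, mul_le_mul_of_nonneg_left hy hb]

theorem eq_argmax_of_isMaxOn (hδ : StrictConvexOn ℝ univ δ)
    (hsstar : ∀ v, IsMaxOn (fun z => z ⬝ᵥ v - δ z) univ (sstar v))
    {v z : ι → ℝ} (hz : IsMaxOn (fun z => z ⬝ᵥ v - δ z) univ z) : z = sstar v :=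
  (((dotProductBilin ℝ ℝ).flip v).concaveOn convex_univ).sub_strictConvexOn hδ
    |>.eq_of_isMaxOn hz (hsstar v) trivial trivial

theorem isMaxOn_of_tendsto {α : Type*} {l : Filter α} [l.NeBot] (hδ : Continuous δ)
    (hsstar : ∀ v, IsMaxOn (fun z => z ⬝ᵥ v - δ z) univ (sstar v))
    {w : α → ι → ℝ} {v z : ι → ℝ} (hw : Tendsto w l (𝓝 v))
    (hz : Tendsto (fun a => sstar (w a)) l (𝓝 z)) :
    IsMaxOn (fun z => z ⬝ᵥ v - δ z) univ z := fun y _ => by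
  have hobj : Continuous fun p : (ι → ℝ) × (ι → ℝ) => p.1 ⬝ᵥ p.2 - δ p.1 :=
    (continuous_fst.dotProduct continuous_snd).sub (hδ.comp continuous_fst)
  exact le_of_tendsto_of_tendsto' ((hobj.tendsto _).comp (tendsto_const_nhds.prodMk_nhds hw))
    ((hobj.tendsto _).comp (hz.prodMk_nhds hw)) fun a => hsstar (w a) (mem_univ y)

theorem continuous_argmax (hδ : StrictConvexOn ℝ univ δ)
    (hsstar : ∀ v, IsMaxOn (fun z => z ⬝ᵥ v - δ z) univ (sstar v))
    (hδstar : ∀ v, δstar v = sstar v ⬝ᵥ v - δ (sstar v)) :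
    Continuous sstar := by
  have hδc : Continuous δ := continuousOn_univ.mp (hδ.convexOn.continuousOn isOpen_univ)
  have hconj : Continuous δstar :=
    continuousOn_univ.mp ((convexOn_conj hsstar hδstar).continuousOn isOpen_univ)
  refine continuous_iff_continuousAt.mpr fun v => ?_
  obtain ⟨C, hC⟩ := (isCompact_closedBall v 2).exists_bound_of_continuousOn hconj.continuousOn
  -- on `closedBall v 1` the subgradients `sstar w` are bounded by the oscillation of `δstar`
  have hbounded : ∀ᶠ w in 𝓝 v, sstar w ∈ Metric.closedBall 0 (2 * C) := by
    filter_upwards [Metric.closedBall_mem_nhds v one_pos] with w hw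
    refine mem_closedBall_zero_iff.mpr <|
      norm_le_two_mul_of_subgradient (conj_add_dotProduct_le hsstar hδstar w) fun y hy => ?_
    refine hC y (Metric.mem_closedBall.mpr ?_)
    linarith [dist_triangle y w v, Metric.mem_closedBall.mp hy, Metric.mem_closedBall.mp hw]
  refine (isCompact_closedBall 0 (2 * C)).tendsto_nhds_of_unique_mapClusterPt hbounded
    fun z _ hz => ?_
  obtain ⟨U, hU, hzU⟩ := mapClusterPt_iff_ultrafilter.mp hz
  exact eq_argmax_of_isMaxOn hδ hsstar (isMaxOn_of_tendsto hδc hsstar hU hzU)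

theorem hasFDerivAt_conj (hδ : StrictConvexOn ℝ univ δ)
    (hsstar : ∀ v, IsMaxOn (fun z => z ⬝ᵥ v - δ z) univ (sstar v))
    (hδstar : ∀ v, δstar v = sstar v ⬝ᵥ v - δ (sstar v)) (v : ι → ℝ) :
    HasFDerivAt δstar (dotProductCLM (sstar v)) v :=
  hasFDerivAt_of_subgradient_of_continuousAt (g := fun w => dotProductCLM (sstar w))
    (conj_add_dotProduct_le hsstar hδstar)
    (dotProductCLM.continuous.comp (continuous_argmax hδ hsstar hδstar)).continuousAt

end Conjugate

end

theorem gradient_selective_log_posterior_general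
    {k d : ℕ}
    (prior : (Fin k → ℝ) → ℝ) (hprior_pos : ∀ β, 0 < prior β) (hprior_diff : Differentiable ℝ prior)
    (μmap : (Fin k → ℝ) → (Fin d → ℝ)) (hμdiff : Differentiable ℝ μmap)
    (Sf : Matrix (Fin d) (Fin d) ℝ) (hSf : Sf.PosDef)
    (δ : (Fin d → ℝ) → ℝ)
    (hδconv : StrictConvexOn ℝ Set.univ δ)
    (sstar : (Fin d → ℝ) → (Fin d → ℝ))
    (hsstar : ∀ v, IsMaxOn (fun z => z ⬝ᵥ v - δ z) Set.univ (sstar v))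
    (δstar : (Fin d → ℝ) → ℝ)
    (hδstar : ∀ v, δstar v = (sstar v) ⬝ᵥ v - δ (sstar v))
    (s : Fin d → ℝ) (c : ℝ)
    -- the (approximate) selective log-posterior, up to additive constant `c`
    (L : (Fin k → ℝ) → ℝ)
    (hL : ∀ β, L β = Real.log (prior β)
      - (Sf⁻¹ *ᵥ (s - μmap β)) ⬝ᵥ (s - μmap β) / 2
      - (δstar (Sf⁻¹ *ᵥ μmap β) - (Sf⁻¹ *ᵥ μmap β) ⬝ᵥ μmap β / 2 + c)) :
    ∀ (β v : Fin k → ℝ),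
      fderiv ℝ L β v =
        fderiv ℝ (fun β' => Real.log (prior β')) β v +
          (Sf⁻¹ *ᵥ (s - sstar (Sf⁻¹ *ᵥ μmap β))) ⬝ᵥ (fderiv ℝ μmap β v) := by
  intro β v
  have hA : (Sf⁻¹).IsSymm := by
    simpa [IsHermitian, IsSymm] using hSf.isHermitian.inv
  have hμ := (hμdiff β).hasFDerivAt
  have hlog := ((hprior_diff β).log (hprior_pos β).ne').hasFDerivAt
  have hmulVec := (LinearMap.toContinuousLinearMap (Sf⁻¹).mulVecLin).hasFDerivAt.comp β hμ
  have hderiv := ((hlog.add ((dotProductCLM (Sf⁻¹ *ᵥ s)).hasFDerivAt.comp β hμ)).sub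
    ((hasFDerivAt_conj hδconv hsstar hδstar _).comp β hmulVec)).sub_const
      ((Sf⁻¹ *ᵥ s) ⬝ᵥ s / 2 + c)
  -- the quadratic terms in `μ(β)` cancel, leaving a term linear in `μ(β)`
  have hLderiv : HasFDerivAt L _ β := hderiv.congr_of_eventuallyEq <| .of_forall fun β => by
    rw [hL, hA.mulVec_sub_dotProduct_sub]
    simp only [LinearMap.coe_toContinuousLinearMap', Pi.sub_apply, Pi.add_apply,
      Function.comp_apply, dotProductCLM_apply, mulVecBilin_apply]
    ring
  rw [hLderiv.fderiv]
  simp [hA.mulVec_dotProduct_comm, mulVec_sub, sub_dotProduct, add_sub_assoc]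

/-- Gradient of the selective log-posterior: with a Gaussian generative density
`f(s|β) ∝ exp(-(s-μ(β))ᵀΣ_f⁻¹(s-μ(β))/2)`, an approximate normalizer
`exp(δ*(Σ_f⁻¹μ(β)) - μ(β)ᵀΣ_f⁻¹μ(β)/2 + c)` where
`δ(z) = ½ zᵀΣ_f⁻¹z + inf_o {Λ_g*(Dz + Po + q) + b(o)}` is strictly convex and
differentiable with conjugate `δ*` and `s*(v) = argmax_z {zᵀv - δ(z)} = ∇δ*(v)`,
the gradient of `log π̃(β|s) = log π(β) + log f(s|β) - log normalizer` equals
`∂log π/∂β + (∂μ/∂β)ᵀ Σ_f⁻¹ (s - s*(Σ_f⁻¹ μ(β)))`. -/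
theorem gradient_selective_log_posterior
    {k d p : ℕ}
    (prior : (Fin k → ℝ) → ℝ) (hprior_pos : ∀ β, 0 < prior β) (hprior_diff : Differentiable ℝ prior)
    (μmap : (Fin k → ℝ) → (Fin d → ℝ)) (hμdiff : Differentiable ℝ μmap)
    (Sf : Matrix (Fin d) (Fin d) ℝ) (hSf : Sf.PosDef)
    (Λgstar : (Fin p → ℝ) → ℝ) (b : (Fin p → ℝ) → ℝ)
    (D : Matrix (Fin p) (Fin d) ℝ) (P : Matrix (Fin p) (Fin p) ℝ) (q : Fin p → ℝ)
    (δ : (Fin d → ℝ) → ℝ)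
    (hδ : ∀ z, δ z = (Sf⁻¹ *ᵥ z) ⬝ᵥ z / 2 +
      ⨅ o : Fin p → ℝ, (Λgstar (D *ᵥ z + P *ᵥ o + q) + b o))
    (hδdiff : Differentiable ℝ δ) (hδconv : StrictConvexOn ℝ Set.univ δ)
    (sstar : (Fin d → ℝ) → (Fin d → ℝ))
    (hsstar : ∀ v, IsMaxOn (fun z => z ⬝ᵥ v - δ z) Set.univ (sstar v))
    (δstar : (Fin d → ℝ) → ℝ)
    (hδstar : ∀ v, δstar v = (sstar v) ⬝ᵥ v - δ (sstar v))
    (s : Fin d → ℝ) (c : ℝ)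
    -- the (approximate) selective log-posterior, up to additive constant `c`
    (L : (Fin k → ℝ) → ℝ)
    (hL : ∀ β, L β = Real.log (prior β)
      - (Sf⁻¹ *ᵥ (s - μmap β)) ⬝ᵥ (s - μmap β) / 2
      - (δstar (Sf⁻¹ *ᵥ μmap β) - (Sf⁻¹ *ᵥ μmap β) ⬝ᵥ μmap β / 2 + c)) :
    ∀ (β v : Fin k → ℝ),
      fderiv ℝ L β v =
        fderiv ℝ (fun β' => Real.log (prior β')) β v +
          (Sf⁻¹ *ᵥ (s - sstar (Sf⁻¹ *ᵥ μmap β))) ⬝ᵥ (fderiv ℝ μmap β v) :=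
  gradient_selective_log_posterior_general prior hprior_pos hprior_diff μmap hμdiff Sf hSf δ hδconv
    sstar hsstar δstar hδstar s c L hL
end
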